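/- For z with |z| bounded, the approximation error of the quadratic Taylor surrogate of the logistic loss satisfies |log(1 + e^{−z}) − (log 2 − z/2 + z²/8)| ≤ z⁴/192 for all z ∈ ℝ. -/

import Mathlib

/-!
Writing `x = z / 2`, one has `log (1 + exp (-z)) = log 2 - z / 2 + log (cosh x)`, so the error of the
surrogate is `log (cosh x) - x ^ 2 / 2` and `z ^ 4 / 192 = x ^ 4 / 12`. Since `tanh' = 1 - tanh ^ 2`,
comparing derivatives on `[0, ∞)` gives `x - x ^ 3 / 3 ≤ tanh x ≤ x`, and integrating once more
(`log cosh` is a primitive of `tanh`) gives `x ^ 2 / 2 - x ^ 4 / 12 ≤ log (cosh x) ≤ x ^ 2 / 2`.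
All of these are even in `x`, so `x ≥ 0` suffices.
-/

open Real Set

lemma le_of_hasDerivAt_le_of_nonneg {f g f' g' : ℝ → ℝ} (hf : ∀ x, HasDerivAt f (f' x) x)
    (hg : ∀ x, HasDerivAt g (g' x) x) (h₀ : f 0 ≤ g 0) (h' : ∀ x, 0 ≤ x → f' x ≤ g' x)
    {x : ℝ} (hx : 0 ≤ x) : f x ≤ g x := by
  have hmono : MonotoneOn (fun y => g y - f y) (Ici 0) := by
    refine monotoneOn_of_hasDerivWithinAt_nonneg (convex_Ici 0)
      (fun y _ => ((hg y).sub (hf y)).continuousAt.continuousWithinAt)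
      (fun y _ => ((hg y).sub (hf y)).hasDerivWithinAt) (fun y hy => ?_)
    rw [interior_Ici] at hy
    exact sub_nonneg.mpr (h' y (le_of_lt hy))
  have := hmono self_mem_Ici hx hx
  simp only at this
  linarith

namespace Real

lemma hasDerivAt_tanh (x : ℝ) : HasDerivAt tanh (1 - tanh x ^ 2) x := by
  rw [show tanh = fun y => sinh y / cosh y from funext tanh_eq_sinh_div_cosh]
  refine ((hasDerivAt_sinh x).div (hasDerivAt_cosh x) (cosh_pos x).ne').congr_deriv ?_
  field_simp

lemma tanh_nonneg {x : ℝ} (hx : 0 ≤ x) : 0 ≤ tanh x := by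
  rw [tanh_eq_sinh_div_cosh]
  exact div_nonneg (sinh_nonneg_iff.mpr hx) (cosh_pos x).le

lemma tanh_le_self {x : ℝ} (hx : 0 ≤ x) : tanh x ≤ x :=
  le_of_hasDerivAt_le_of_nonneg hasDerivAt_tanh hasDerivAt_id' (by simp)
    (fun y _ => sub_le_self 1 (sq_nonneg (tanh y))) hx

lemma sub_pow_three_div_three_le_tanh {x : ℝ} (hx : 0 ≤ x) : x - x ^ 3 / 3 ≤ tanh x := by
  have hpoly (y : ℝ) : HasDerivAt (fun y => y - y ^ 3 / 3) (1 - y ^ 2) y :=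
    ((hasDerivAt_id' y).sub ((hasDerivAt_pow 3 y).div_const 3)).congr_deriv (by norm_num)
  refine le_of_hasDerivAt_le_of_nonneg hpoly hasDerivAt_tanh (by simp) (fun y hy => ?_) hx
  have := tanh_nonneg hy
  nlinarith [tanh_le_self hy]

lemma hasDerivAt_log_cosh (x : ℝ) : HasDerivAt (fun y => log (cosh y)) (tanh x) x := by
  simpa [tanh_eq_sinh_div_cosh] using (hasDerivAt_cosh x).log (cosh_pos x).ne'

lemma log_cosh_le_sq_div_two (x : ℝ) : log (cosh x) ≤ x ^ 2 / 2 := by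
  simpa using log_le_log (cosh_pos x) (cosh_le_exp_half_sq x)

lemma sq_div_two_sub_pow_four_div_twelve_le_log_cosh (x : ℝ) :
    x ^ 2 / 2 - x ^ 4 / 12 ≤ log (cosh x) := by
  have hpoly (y : ℝ) : HasDerivAt (fun y => y ^ 2 / 2 - y ^ 4 / 12) (y - y ^ 3 / 3) y := by
    refine (((hasDerivAt_pow 2 y).div_const 2).sub
      ((hasDerivAt_pow 4 y).div_const 12)).congr_deriv ?_
    norm_num
    ring
  have h := le_of_hasDerivAt_le_of_nonneg hpoly hasDerivAt_log_cosh (by simp)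
    (fun y hy => sub_pow_three_div_three_le_tanh hy) (abs_nonneg x)
  simpa only [cosh_abs, sq_abs, Even.pow_abs (by decide : Even 4)] using h

lemma abs_log_cosh_sub_sq_div_two_le (x : ℝ) : |log (cosh x) - x ^ 2 / 2| ≤ x ^ 4 / 12 := by
  rw [abs_le]
  constructor
  · linarith [sq_div_two_sub_pow_four_div_twelve_le_log_cosh x]
  · have hx4 : 0 ≤ x ^ 4 := by positivity
    linarith [log_cosh_le_sq_div_two x]

lemma log_one_add_exp_neg (z : ℝ) : log (1 + exp (-z)) = log 2 - z / 2 + log (cosh (z / 2)) := by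
  have h : 1 + exp (-z) = 2 * exp (-(z / 2)) * cosh (z / 2) := by
    have h₁ : exp (-(z / 2)) * exp (z / 2) = 1 := by rw [← exp_add]; simp
    have h₂ : exp (-(z / 2)) * exp (-(z / 2)) = exp (-z) := by rw [← exp_add]; ring_nf
    rw [cosh_eq]
    linear_combination -h₁ - h₂
  rw [h, log_mul (by positivity) (cosh_pos _).ne', log_mul two_ne_zero (exp_pos _).ne', log_exp]
  ring

end Real

theorem stmt_18 (z : ℝ) :
    |Real.log (1 + Real.exp (-z)) - (Real.log 2 - z / 2 + z ^ 2 / 8)| ≤ z ^ 4 / 192 := by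
  calc |Real.log (1 + Real.exp (-z)) - (Real.log 2 - z / 2 + z ^ 2 / 8)|
      = |Real.log (Real.cosh (z / 2)) - (z / 2) ^ 2 / 2| := by
        rw [Real.log_one_add_exp_neg]; ring_nf
    _ ≤ (z / 2) ^ 4 / 12 := Real.abs_log_cosh_sub_sq_div_two_le (z / 2)
    _ = z ^ 4 / 192 := by ring
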